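/- Let q be a prime power. Every line of PG(2,q^2) meets the Hermitian curve H(2,q^2) in exactly 1 or exactly q+1 points; in particular H(2,q^2) contains no line of PG(2,q^2). -/

import Mathlib

open Projectivization
open scoped LinearAlgebra.Projectivization

variable (F : Type) [Field F] [Fintype F]

/-- The projective space PG(n, |F|) over `F`, as the projectivization of `Fin (n+1) → F`. -/
abbrev PG (n : ℕ) := ℙ F (Fin (n+1) → F)

/-- The Hermitian variety `H(n,q^2)`: points `[x_0 : ... : x_n]` with
`x_0^{q+1} + ... + x_n^{q+1} = 0`. -/
def Herm (q n : ℕ) : Set (PG F n) :=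
  {p | ∑ i, (p.rep i) ^ (q+1) = 0}

/-- The set of points of `PG(n,q^2)` lying on the line given by a `2`-dimensional subspace. -/
def lineSet (n : ℕ) (W : Submodule F (Fin (n+1) → F)) : Set (PG F n) :=
  {p | p.submodule ≤ W}

/-- `W` determines a line of `PG(n,q^2)`, i.e. it is a `2`-dimensional subspace. -/
def IsLine (n : ℕ) (W : Submodule F (Fin (n+1) → F)) : Prop :=
  Module.finrank F W = 2

/-- A line is tangent to `H(n,q^2)` if it meets it in exactly one point. -/
def IsTangent (q n : ℕ) (W : Submodule F (Fin (n+1) → F)) : Prop :=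
  IsLine F n W ∧ (lineSet F n W ∩ Herm F q n).ncard = 1

/-- The graph `NU(n+1,q^2)`: vertices are points off the Hermitian variety, two distinct
vertices adjacent iff the line joining them is tangent to `H(n,q^2)`. -/
def NU (q n : ℕ) : SimpleGraph {p : PG F n // p ∉ Herm F q n} where
  Adj u v := u ≠ v ∧ IsTangent F q n (Submodule.span F {u.1.rep, v.1.rep})
  symm := ⟨by
    rintro u v ⟨h1, h2⟩
    exact ⟨h1.symm, by rwa [Set.pair_comm]⟩⟩
  loopless := ⟨fun u h => h.1 rfl⟩

/-- A strongly regular graph with parameters `(v, k, l, m)`. -/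
def IsSRG {V : Type} (G : SimpleGraph V) (v k l m : ℤ) : Prop :=
  (Nat.card V : ℤ) = v ∧
  (∀ x, (Nat.card (G.neighborSet x) : ℤ) = k) ∧
  (∀ x y, G.Adj x y → (Nat.card (G.commonNeighbors x y) : ℤ) = l) ∧
  (∀ x y, x ≠ y → ¬ G.Adj x y → (Nat.card (G.commonNeighbors x y) : ℤ) = m)

/-!
Write `N y = y ^ (q + 1)` and `T y = y + y ^ q` for the norm and trace of `𝔽_{q²}/𝔽_q`.
Choosing a basis `a, b` of the line, its points are `[a]` and `[x a + b]` for `x ∈ F`, and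
`[x a + b]` lies on the curve iff `α N(x) + T(β x) + δ = 0`, where `α, β, δ` are the values
of the Hermitian form on `a, b`. If `α ≠ 0`, completing the norm turns this into `N(x + c) = E`
with `E ∈ 𝔽_q`, which has `1` or `q + 1` solutions. If `α = 0` the point `[a]` is on the curve,
and for `β ≠ 0` the equation `T(β x) = -δ` has `q` solutions. The case `α = β = δ = 0` is a
totally isotropic plane, impossible in dimension `3`: a totally isotropic subspace has at most
half the dimension. Since the line has `q² + 1` points, it is not contained in the curve.
-/

open Polynomial

section Counting

lemma ncard_setOf_pow_add_mul_eq_le {K : Type*} [Field K] {m : ℕ} (hm : 2 ≤ m) (a b : K) :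
    {x : K | x ^ m + a * x = b}.ncard ≤ m := by
  set P : K[X] := X ^ m + (C a * X - C b)
  have hdeg : (C a * X - C b).degree < (X ^ m : K[X]).degree := by
    rw [degree_X_pow]
    exact (degree_sub_le _ _).trans_lt <| max_lt
      ((degree_C_mul_X_le a).trans_lt (by exact_mod_cast (by omega : 1 < m)))
      (degree_C_le.trans_lt (by exact_mod_cast (by omega : 0 < m)))
  have hP : P ≠ 0 := (monic_X_pow_add (by rwa [degree_X_pow] at hdeg)).ne_zero
  have hroots : {x : K | x ^ m + a * x = b} = P.rootSet K := by
    ext x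
    rw [mem_rootSet_of_ne hP, coe_aeval_eq_eval]
    simp only [Set.mem_ofPred_eq, P, eval_add, eval_sub, eval_mul, eval_pow, eval_X, eval_C]
    constructor <;> intro h <;> linear_combination h
  rw [hroots, ← natDegree_X_pow (R := K) m, ← natDegree_add_eq_left_of_degree_lt hdeg]
  exact ncard_rootSet_le P K

lemma Set.ncard_preimage_singleton_eq_of_card_eq_mul {α β : Type*} [Finite α] [Finite β]
    (f : α → β) (t : Set β) (hft : ∀ a, f a ∈ t) {r k : ℕ} (ht : t.ncard ≤ r)
    (hfib : ∀ b ∈ t, (f ⁻¹' {b}).ncard ≤ k) (hα : Nat.card α = r * k) {b : β} (hb : b ∈ t) :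
    (f ⁻¹' {b}).ncard = k := by
  classical
  have := Fintype.ofFinite α
  have := Fintype.ofFinite β
  have hfiber : ∀ b, (f ⁻¹' {b}).ncard = (Finset.univ.filter (f · = b)).card := fun b => by
    rw [Set.ncard_eq_toFinset_card']; congr; ext; simp
  simp only [hfiber] at hfib ⊢
  have hsum : ∑ b ∈ t.toFinset, (Finset.univ.filter (f · = b)).card = ∑ _b ∈ t.toFinset, k := by
    refine le_antisymm (Finset.sum_le_sum fun b hb => hfib b (Set.mem_toFinset.mp hb)) ?_
    calc ∑ _b ∈ t.toFinset, k = t.ncard * k := by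
          rw [Finset.sum_const, smul_eq_mul, Set.ncard_eq_toFinset_card']
      _ ≤ r * k := Nat.mul_le_mul_right k ht
      _ = ∑ b ∈ t.toFinset, (Finset.univ.filter (f · = b)).card := by
        rw [← hα, Nat.card_eq_fintype_card, ← Finset.card_univ,
          Finset.card_eq_sum_card_fiberwise fun a _ => Set.mem_toFinset.mpr (hft a)]
  exact (Finset.sum_eq_sum_iff_of_le fun b hb => hfib b (Set.mem_toFinset.mp hb)).mp hsum b
    (Set.mem_toFinset.mpr hb)

end Counting

section QuadraticExtension

variable {K : Type*} [Field K] [Fintype K] {q : ℕ}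

lemma two_le_of_card_eq_sq (hK : Fintype.card K = q ^ 2) : 2 ≤ q := by
  have h := hK ▸ Fintype.one_lt_card (α := K)
  by_contra! hq
  interval_cases q <;> simp at h

lemma add_pow_of_card_eq_sq (hK : Fintype.card K = q ^ 2) (x y : K) :
    (x + y) ^ q = x ^ q + y ^ q := by
  obtain ⟨p, _, m, hp, hpm⟩ := FiniteField.card' K
  have hq : q ∣ p ^ (m : ℕ) := hpm ▸ hK ▸ dvd_pow_self q two_ne_zero
  obtain ⟨k, -, rfl⟩ := (Nat.dvd_prime_pow hp).mp hq
  have := Fact.mk hp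
  exact add_pow_char_pow x y p k

lemma ne_zero_of_card_eq_sq (hK : Fintype.card K = q ^ 2) : q ≠ 0 :=
  (zero_lt_two.trans_le (two_le_of_card_eq_sq hK)).ne'

lemma pow_pow_of_card_eq_sq (hK : Fintype.card K = q ^ 2) (x : K) : (x ^ q) ^ q = x := by
  rw [← pow_mul, ← sq, ← hK, FiniteField.pow_card]

lemma pow_succ_pow_of_card_eq_sq (hK : Fintype.card K = q ^ 2) (x : K) :
    (x ^ (q + 1)) ^ q = x ^ (q + 1) := by
  rw [pow_succ, mul_pow, pow_pow_of_card_eq_sq hK, mul_comm]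

variable (q) in
def qFrobenius (hK : Fintype.card K = q ^ 2) : K →+* K where
  toFun x := x ^ q
  map_one' := one_pow q
  map_mul' x y := mul_pow x y q
  map_zero' := zero_pow (ne_zero_of_card_eq_sq hK)
  map_add' := add_pow_of_card_eq_sq hK

@[simp]
lemma qFrobenius_apply (hK : Fintype.card K = q ^ 2) (x : K) : qFrobenius q hK x = x ^ q := rfl

lemma ncard_setOf_pow_eq_self_le (hK : Fintype.card K = q ^ 2) : {x : K | x ^ q = x}.ncard ≤ q :=
  calc _ = {x : K | x ^ q + -1 * x = 0}.ncard := by congr 1; ext x; simp [add_neg_eq_zero]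
    _ ≤ q := ncard_setOf_pow_add_mul_eq_le (two_le_of_card_eq_sq hK) (-1) 0

lemma ncard_setOf_add_pow_eq (hK : Fintype.card K = q ^ 2) {d : K} (hd : d ^ q = d) :
    {u : K | u + u ^ q = d}.ncard = q := by
  refine Set.ncard_preimage_singleton_eq_of_card_eq_mul (fun u : K => u + u ^ q)
    {c | c ^ q = c} (fun u => ?_) (ncard_setOf_pow_eq_self_le hK) (fun b _ => ?_)
    (by rw [Nat.card_eq_fintype_card, hK, sq]) hd
  · rw [Set.mem_ofPred_eq, add_pow_of_card_eq_sq hK, pow_pow_of_card_eq_sq hK, add_comm]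
  · calc _ = {x : K | x ^ q + 1 * x = b}.ncard := by congr 1; ext x; simp [add_comm]
      _ ≤ q := ncard_setOf_pow_add_mul_eq_le (two_le_of_card_eq_sq hK) 1 b

lemma ncard_setOf_pow_succ_eq (hK : Fintype.card K = q ^ 2) {c : K} (hc₀ : c ≠ 0)
    (hc : c ^ q = c) : {y : K | y ^ (q + 1) = c}.ncard = q + 1 := by
  have hq := two_le_of_card_eq_sq hK
  set N : Kˣ → K := fun u => (u : K) ^ (q + 1)
  have hfiber : ∀ b ≠ (0 : K), Units.val '' (N ⁻¹' {b}) = {y | y ^ (q + 1) = b} := by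
    intro b hb
    ext y
    refine ⟨fun ⟨u, hu, huy⟩ => huy ▸ hu, fun hy => ⟨Units.mk0 y ?_, hy, rfl⟩⟩
    rintro rfl
    exact hb (by rw [← Set.mem_ofPred_eq.mp hy, zero_pow (Nat.succ_ne_zero q)])
  rw [← hfiber c hc₀, Set.ncard_image_of_injective _ Units.val_injective]
  refine Set.ncard_preimage_singleton_eq_of_card_eq_mul N ({c | c ^ q = c} \ {0})
    (fun u => ⟨pow_succ_pow_of_card_eq_sq hK (u : K), pow_ne_zero _ u.ne_zero⟩) (r := q - 1) ?_
    (fun b hb => ?_) ?_ ⟨hc, hc₀⟩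
  · rw [Set.ncard_sdiff_singleton_of_mem (by simp [zero_pow (by omega : q ≠ 0)])]
    exact Nat.sub_le_sub_right (ncard_setOf_pow_eq_self_le hK) 1
  · rw [← Set.ncard_image_of_injective _ Units.val_injective, hfiber b hb.2]
    simpa using ncard_setOf_pow_add_mul_eq_le (by omega : 2 ≤ q + 1) (0 : K) b
  · rw [Nat.card_units, Nat.card_eq_fintype_card, hK]
    zify [show 1 ≤ q by omega, show 1 ≤ q ^ 2 by nlinarith]
    ring

lemma ncard_setOf_norm_add_trace_add_eq_zero (hK : Fintype.card K = q ^ 2) {α β δ : K}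
    (hα₀ : α ≠ 0) (hα : α ^ q = α) (hδ : δ ^ q = δ) :
    {x : K | α * x ^ (q + 1) + β ^ q * x ^ q + β * x + δ = 0}.ncard = 1 ∨
      {x : K | α * x ^ (q + 1) + β ^ q * x ^ q + β * x + δ = 0}.ncard = q + 1 := by
  set c := β ^ q / α
  set E := (β ^ (q + 1) - α * δ) / α ^ 2
  have hcq : c ^ q = β / α := by
    rw [div_pow, pow_pow_of_card_eq_sq hK, hα]
  have hfactor : ∀ x : K, α * x ^ (q + 1) + β ^ q * x ^ q + β * x + δ
      = α * ((x + c) ^ (q + 1) - E) := by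
    intro x
    rw [pow_succ (x + c), add_pow_of_card_eq_sq hK, hcq]
    simp only [c, E]
    field_simp
    ring
  have hE : E ^ q = E := by
    change qFrobenius q hK E = E
    simp only [E, map_div₀, map_sub, map_mul, map_pow, qFrobenius_apply, hα, hδ]
    rw [← pow_mul, mul_comm, pow_mul, pow_succ_pow_of_card_eq_sq hK]
  have hzeros : {x : K | α * x ^ (q + 1) + β ^ q * x ^ q + β * x + δ = 0}
      = (· - c) '' {y : K | y ^ (q + 1) = E} := by
    ext x
    simp only [hfactor, mul_eq_zero, hα₀, false_or, sub_eq_zero, Set.mem_ofPred_eq,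
      Set.mem_image]
    exact ⟨fun h => ⟨x + c, h, add_sub_cancel_right x c⟩, fun ⟨y, hy, hyx⟩ => hyx ▸ by simpa⟩
  rw [hzeros, Set.ncard_image_of_injective _ sub_left_injective]
  by_cases hE₀ : E = 0
  · left
    simp [hE₀]
  · exact Or.inr (ncard_setOf_pow_succ_eq hK hE₀ hE)

lemma ncard_setOf_trace_add_eq_zero (hK : Fintype.card K = q ^ 2) {β δ : K} (hβ : β ≠ 0)
    (hδ : δ ^ q = δ) : {x : K | β ^ q * x ^ q + β * x + δ = 0}.ncard = q := by
  have hzeros : {x : K | β ^ q * x ^ q + β * x + δ = 0}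
      = (β⁻¹ * ·) '' {u : K | u + u ^ q = -δ} := by
    ext x
    simp only [Set.mem_ofPred_eq, Set.mem_image]
    refine ⟨fun h => ⟨β * x, ?_, by field_simp⟩, fun ⟨u, hu, hux⟩ => hux ▸ ?_⟩
    · rw [mul_pow]; linear_combination h
    · rw [mul_pow, inv_pow]; field_simp; linear_combination hu
  rw [hzeros, Set.ncard_image_of_injective _ (mul_right_injective₀ (inv_ne_zero hβ))]
  exact ncard_setOf_add_pow_eq hK (by rw [← qFrobenius_apply hK, map_neg, qFrobenius_apply, hδ])

end QuadraticExtension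

section HermitianForm

variable {K : Type*} [Field K] {q : ℕ} {ι : Type*} [Fintype ι]

def hermForm (q : ℕ) (u v : ι → K) : K := ∑ i, u i * v i ^ q

lemma hermForm_self (q : ℕ) (v : ι → K) : hermForm q v v = ∑ i, v i ^ (q + 1) :=
  Finset.sum_congr rfl fun i _ => (pow_succ' (v i) q).symm

lemma hermForm_smul_smul (q : ℕ) (c : K) (v : ι → K) :
    hermForm q (c • v) (c • v) = c ^ (q + 1) * hermForm q v v := by
  simp only [hermForm, Finset.mul_sum, Pi.smul_apply, smul_eq_mul]
  exact Finset.sum_congr rfl fun i _ => by ring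

lemma hermForm_pow [Fintype K] (hK : Fintype.card K = q ^ 2) (u v : ι → K) :
    hermForm q u v ^ q = hermForm q v u := by
  rw [← qFrobenius_apply hK, hermForm, map_sum]
  refine Finset.sum_congr rfl fun i _ => ?_
  rw [map_mul, qFrobenius_apply, qFrobenius_apply, pow_pow_of_card_eq_sq hK, mul_comm]

lemma hermForm_smul_add_self [Fintype K] (hK : Fintype.card K = q ^ 2) (a b : ι → K) (x : K) :
    hermForm q (x • a + b) (x • a + b) = hermForm q a a * x ^ (q + 1) +
      hermForm q a b ^ q * x ^ q + hermForm q a b * x + hermForm q b b := by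
  rw [hermForm_pow hK]
  simp only [hermForm, Pi.add_apply, Pi.smul_apply, smul_eq_mul, add_pow_of_card_eq_sq hK,
    Finset.sum_mul, ← Finset.sum_add_distrib]
  exact Finset.sum_congr rfl fun i _ => by ring

-- The matrices with rows `v j ^ q` and with columns `v j` have rank `card κ` and product zero.
lemma two_mul_card_le_of_hermForm_eq_zero [Fintype K] (hK : Fintype.card K = q ^ 2)
    {κ : Type*} [Fintype κ] {v : κ → ι → K} (hv : LinearIndependent K v)
    (hiso : ∀ j l, hermForm q (v j) (v l) = 0) :
    2 * Fintype.card κ ≤ Fintype.card ι := by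
  set σ := qFrobenius q hK
  have hσσ : ∀ x, σ (σ x) = x := pow_pow_of_card_eq_sq hK
  have hσv : LinearIndependent K (σ.toAddMonoidHom.compLeft ι ∘ v) :=
    hv.map_of_injective_injective σ _ (fun r hr => by simpa [hσσ] using congrArg σ hr)
      (fun m hm => funext fun i => by simpa [hσσ] using congrArg σ (congrFun hm i))
      (fun r m => funext fun i => by simp [hσσ])
  let A : Matrix κ ι K := Matrix.of fun j i => σ (v j i)
  let B : Matrix ι κ K := (Matrix.of v).transpose
  have hAB : A * B = 0 := by
    ext j l
    simpa [A, B, σ, Matrix.mul_apply, hermForm, mul_comm] using hiso l j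
  have hA : A.rank = Fintype.card κ := LinearIndependent.rank_matrix hσv
  have hB : B.rank = Fintype.card κ := by
    rw [Matrix.rank_transpose]; exact LinearIndependent.rank_matrix hv
  have := Matrix.rank_add_rank_le_card_of_mul_eq_zero hAB
  omega

lemma not_isotropic_pair_of_card_lt_four [Fintype K] (hK : Fintype.card K = q ^ 2)
    (hι : Fintype.card ι < 4) {a b : ι → K} (hab : LinearIndependent K ![a, b]) :
    ¬ (hermForm q a a = 0 ∧ hermForm q a b = 0 ∧ hermForm q b b = 0) := by
  rintro ⟨hα, hβ, hδ⟩
  have := two_mul_card_le_of_hermForm_eq_zero hK hab fun j l => by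
    fin_cases j <;> fin_cases l <;>
      simp [hα, hδ, ← hermForm_pow hK a b, hβ, zero_pow (ne_zero_of_card_eq_sq hK)]
  simp only [Fintype.card_fin] at this
  omega

end HermitianForm

section ProjectiveLine

variable {K V : Type*} [Field K] [AddCommGroup V] [Module K V] {a b : V}

lemma Submodule.exists_linearIndependent_pair_of_finrank_eq_two {W : Submodule K V}
    (hW : Module.finrank K W = 2) :
    ∃ a b : V, LinearIndependent K ![a, b] ∧ Submodule.span K {a, b} = W := by
  have := Module.finite_of_finrank_eq_succ hW
  let B := Module.finBasisOfFinrankEq K W hW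
  have hB : W.subtype ∘ B = ![(B 0 : V), B 1] := by
    ext i : 1; fin_cases i <;> rfl
  refine ⟨B 0, B 1, hB ▸ B.linearIndependent.map' W.subtype W.ker_subtype, ?_⟩
  rw [← Matrix.range_cons_cons_empty, ← hB, Set.range_comp, ← Submodule.map_span, B.span_eq,
    Submodule.map_subtype_top]

lemma LinearIndependent.pair_ne_zero_left (hab : LinearIndependent K ![a, b]) : a ≠ 0 :=
  hab.ne_zero 0

lemma LinearIndependent.smul_add_ne_zero (hab : LinearIndependent K ![a, b]) (x : K) :
    x • a + b ≠ 0 := fun h => by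
  simpa using LinearIndependent.pair_iff.mp hab x 1 (by simpa using h)

variable (K) in
def lineChart (hab : LinearIndependent K ![a, b]) (x : K) : ℙ K V :=
  mk K (x • a + b) (hab.smul_add_ne_zero x)

lemma lineChart_injective (hab : LinearIndependent K ![a, b]) :
    Function.Injective (lineChart K hab) := by
  intro x y hxy
  obtain ⟨c, hc⟩ := (mk_eq_mk_iff' K _ _ _ _).mp hxy
  obtain ⟨h₁, h₂⟩ := LinearIndependent.pair_iff.mp hab (c * y - x) (c - 1) (by
    linear_combination (norm := module) hc)
  linear_combination -h₁ + y * h₂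

lemma mk_notMem_range_lineChart (hab : LinearIndependent K ![a, b]) :
    mk K a hab.pair_ne_zero_left ∉ Set.range (lineChart K hab) := by
  rintro ⟨x, hx⟩
  obtain ⟨c, hc⟩ := (mk_eq_mk_iff' K _ _ _ _).mp hx
  have h := LinearIndependent.pair_iff.mp hab (c - x) (-1) (by
    linear_combination (norm := module) hc)
  simp at h

lemma setOf_submodule_le_span_pair (hab : LinearIndependent K ![a, b]) :
    {p : ℙ K V | p.submodule ≤ Submodule.span K {a, b}} =
      insert (mk K a hab.pair_ne_zero_left) (Set.range (lineChart K hab)) := by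
  ext p
  induction p using Projectivization.ind with | h v hv => ?_
  simp only [Set.mem_ofPred_eq, submodule_mk, Submodule.span_singleton_le_iff_mem,
    Submodule.mem_span_pair, Set.mem_insert_iff, Set.mem_range, lineChart, mk_eq_mk_iff']
  constructor
  · rintro ⟨s, t, rfl⟩
    by_cases ht : t = 0
    · exact Or.inl ⟨s, by simp [ht]⟩
    · refine Or.inr ⟨t⁻¹ * s, t⁻¹, ?_⟩
      rw [smul_add, smul_smul, smul_smul, inv_mul_cancel₀ ht, one_smul]
  · rintro (⟨c, rfl⟩ | ⟨y, c, hc⟩)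
    · exact ⟨c, 0, by simp⟩
    · have hc₀ : c ≠ 0 := by
        rintro rfl
        exact hab.smul_add_ne_zero y (by rw [← hc, zero_smul])
      refine ⟨c⁻¹ * y, c⁻¹, ?_⟩
      rw [mul_smul, ← smul_add, ← hc, smul_smul, inv_mul_cancel₀ hc₀, one_smul]

lemma ncard_setOf_submodule_le_span_pair [Finite K] (hab : LinearIndependent K ![a, b]) :
    {p : ℙ K V | p.submodule ≤ Submodule.span K {a, b}}.ncard = Nat.card K + 1 := by
  rw [setOf_submodule_le_span_pair hab,
    Set.ncard_insert_of_notMem (mk_notMem_range_lineChart hab),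
    Set.ncard_range_of_injective (lineChart_injective hab)]

end ProjectiveLine

section HermitianVariety

variable {K : Type} [Field K] {q n : ℕ}

lemma mk_mem_Herm_iff (v : Fin (n + 1) → K) (hv : v ≠ 0) :
    mk K v hv ∈ Herm K q n ↔ hermForm q v v = 0 := by
  obtain ⟨c, hc⟩ := (mk_eq_mk_iff K _ v (rep_nonzero _) hv).mp (mk_rep (mk K v hv))
  rw [Herm, Set.mem_ofPred_eq, ← hermForm_self, ← hc, Units.smul_def, hermForm_smul_smul,
    mul_eq_zero, or_iff_right (pow_ne_zero _ c.ne_zero)]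

open Classical in
lemma ncard_lineSet_inter_Herm [Finite K] {a b : Fin (n + 1) → K}
    (hab : LinearIndependent K ![a, b]) :
    (lineSet K n (Submodule.span K {a, b}) ∩ Herm K q n).ncard =
      (if hermForm q a a = 0 then 1 else 0) +
        {x : K | hermForm q (x • a + b) (x • a + b) = 0}.ncard := by
  have hchart : lineChart K hab ⁻¹' Herm K q n = {x | hermForm q (x • a + b) (x • a + b) = 0} :=
    Set.ext fun x => mk_mem_Herm_iff _ _
  have hpa := mk_notMem_range_lineChart hab
  rw [lineSet, setOf_submodule_le_span_pair hab, ← Set.ncard_image_of_injective _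
    (lineChart_injective hab), ← hchart, Set.image_preimage_eq_range_inter]
  split_ifs with ha
  · rw [Set.insert_inter_of_mem ((mk_mem_Herm_iff a _).mpr ha),
      Set.ncard_insert_of_notMem fun h => hpa h.1, add_comm]
  · rw [Set.insert_inter_of_notMem (mt (mk_mem_Herm_iff a _).mp ha), zero_add]

lemma ncard_lineSet_inter_Herm_eq_one_or [Fintype K] (hK : Fintype.card K = q ^ 2)
    {a b : Fin (n + 1) → K} (hab : LinearIndependent K ![a, b])
    (hab_iso : ¬ (hermForm q a a = 0 ∧ hermForm q a b = 0 ∧ hermForm q b b = 0)) :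
    (lineSet K n (Submodule.span K {a, b}) ∩ Herm K q n).ncard = 1 ∨
      (lineSet K n (Submodule.span K {a, b}) ∩ Herm K q n).ncard = q + 1 := by
  have hα := hermForm_pow hK a a
  have hδ := hermForm_pow hK b b
  simp only [ncard_lineSet_inter_Herm hab, hermForm_smul_add_self hK]
  split_ifs with hα₀
  · simp only [hα₀, zero_mul, zero_add]
    by_cases hβ₀ : hermForm q a b = 0
    · have hδ₀ : hermForm q b b ≠ 0 := fun h => hab_iso ⟨hα₀, hβ₀, h⟩
      left
      simp [hβ₀, zero_pow (ne_zero_of_card_eq_sq hK), hδ₀]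
    · right
      rw [ncard_setOf_trace_add_eq_zero hK hβ₀ hδ, add_comm]
  · rw [zero_add]
    exact ncard_setOf_norm_add_trace_add_eq_zero hK hα₀ hα hδ

end HermitianVariety

theorem line_meets_herm (q : ℕ) (hF : Fintype.card F = q ^ 2)
    (W : Submodule F (Fin 3 → F)) (hW : IsLine F 2 W) :
    ((lineSet F 2 W ∩ Herm F q 2).ncard = 1 ∨
      (lineSet F 2 W ∩ Herm F q 2).ncard = q + 1) ∧
    ¬ lineSet F 2 W ⊆ Herm F q 2 := by
  obtain ⟨a, b, hab, rfl⟩ := Submodule.exists_linearIndependent_pair_of_finrank_eq_two hW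
  have hcount := ncard_lineSet_inter_Herm_eq_one_or hF hab
    (not_isotropic_pair_of_card_lt_four hF (by simp) hab)
  refine ⟨hcount, fun hsub => ?_⟩
  have hline : (lineSet F 2 (Submodule.span F {a, b})).ncard = q ^ 2 + 1 := by
    rw [lineSet, ncard_setOf_submodule_le_span_pair hab, Nat.card_eq_fintype_card, hF]
  rw [Set.inter_eq_left.mpr hsub, hline] at hcount
  have := two_le_of_card_eq_sq hF
  rcases hcount with h | h <;> nlinarith
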